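/- The quartic polynomial kernel S_4 with parameters a₀₂, a₀₃ satisfies the partition of unity: for every real t, Σ_{i∈ℤ} S_4(t - i) = 1. -/

import Mathlib

/-!
Translating by `⌊t⌋` reduces the sum to `s = Int.fract t ∈ [0, 1)`. Since `S4` vanishes for
`|x| ≥ 2`, only the translates at `s + 1, s, s - 1, s - 2` contribute, and on `[0, 1]` each of them is
given by one polynomial piece; the four pieces sum to `1` identically in `s`. Both pieces vanish at
the breakpoints, so the piecewise formulas hold on closed intervals and `s = 0` needs no separate case.
-/

noncomputable def S4 (a2 a3 t : ℝ) : ℝ :=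
  if |t| < 1 then
    (1 - |t|) * (1 + |t| + (1 + a2) * |t| ^ 2 + (1 + a2 + a3) * |t| ^ 3)
  else if |t| < 2 then
    (1 - |t|) * (2 - |t|) ^ 2 * (5 + 3 * a2 + 2 * a3 - (1 + a2 + a3) * |t|)
  else 0

section IntegerShifts

variable {M : Type*} [AddCommMonoid M] [TopologicalSpace M]

theorem tsum_int_sub_eq_tsum_fract_sub (f : ℝ → M) (t : ℝ) :
    ∑' i : ℤ, f (t - i) = ∑' i : ℤ, f (Int.fract t - i) := by
  rw [← (Equiv.addRight ⌊t⌋).tsum_eq]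
  congr! 2 with i
  simp only [Equiv.coe_addRight, Int.cast_add, Int.fract]
  ring_nf

theorem tsum_int_sub_eq_four_terms {f : ℝ → M} (hf : ∀ x, 2 ≤ |x| → f x = 0)
    {s : ℝ} (hs0 : 0 ≤ s) (hs1 : s < 1) :
    ∑' i : ℤ, f (s - i) = f (s + 1) + f s + f (s - 1) + f (s - 2) := by
  rw [tsum_eq_sum (s := Finset.Icc (-1) 2)]
  · simp [show Finset.Icc (-1 : ℤ) 2 = {-1, 0, 1, 2} from rfl, add_assoc, sub_eq_add_neg]
  · intro i hi
    apply hf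
    rw [Finset.mem_Icc, not_and_or, not_le, not_le] at hi
    rcases hi with hi | hi
    · have : (i : ℝ) ≤ -2 := by exact_mod_cast Int.le_sub_one_iff.mpr hi
      exact le_abs.mpr (Or.inl (by linarith))
    · have : (3 : ℝ) ≤ i := by exact_mod_cast hi
      exact le_abs.mpr (Or.inr (by linarith))

end IntegerShifts

section S4

variable (a2 a3 : ℝ) {t : ℝ}

theorem S4_of_abs_le_one (h : |t| ≤ 1) :
    S4 a2 a3 t = (1 - |t|) * (1 + |t| + (1 + a2) * |t| ^ 2 + (1 + a2 + a3) * |t| ^ 3) := by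
  rcases h.lt_or_eq with h | h
  · simp [S4, h]
  · simp [S4, h]

theorem S4_of_one_le_abs_le_two (h1 : 1 ≤ |t|) (h2 : |t| ≤ 2) :
    S4 a2 a3 t = (1 - |t|) * (2 - |t|) ^ 2 * (5 + 3 * a2 + 2 * a3 - (1 + a2 + a3) * |t|) := by
  rcases h2.lt_or_eq with h2 | h2
  · simp [S4, h1.not_gt, h2]
  · simp [S4, h2]

theorem S4_of_two_le_abs (h : 2 ≤ |t|) : S4 a2 a3 t = 0 := by
  simp [S4, (one_lt_two.trans_le h).not_gt, h.not_gt]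

theorem S4_four_translates_sum_eq_one {s : ℝ} (hs0 : 0 ≤ s) (hs1 : s ≤ 1) :
    S4 a2 a3 (s + 1) + S4 a2 a3 s + S4 a2 a3 (s - 1) + S4 a2 a3 (s - 2) = 1 := by
  have e1 : |s + 1| = s + 1 := abs_of_nonneg (by linarith)
  have e2 : |s| = s := abs_of_nonneg hs0
  have e3 : |s - 1| = 1 - s := by rw [abs_sub_comm]; exact abs_of_nonneg (by linarith)
  have e4 : |s - 2| = 2 - s := by rw [abs_sub_comm]; exact abs_of_nonneg (by linarith)
  rw [S4_of_one_le_abs_le_two a2 a3 (by linarith [e1]) (by linarith [e1]),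
    S4_of_abs_le_one a2 a3 (by linarith [e2]), S4_of_abs_le_one a2 a3 (by linarith [e3]),
    S4_of_one_le_abs_le_two a2 a3 (by linarith [e4]) (by linarith [e4]), e1, e2, e3, e4]
  ring

end S4

theorem S4_partition_of_unity (a2 a3 : ℝ) (t : ℝ) :
    ∑' i : ℤ, S4 a2 a3 (t - i) = 1 := by
  rw [tsum_int_sub_eq_tsum_fract_sub,
    tsum_int_sub_eq_four_terms (fun _ => S4_of_two_le_abs a2 a3) (Int.fract_nonneg t)
      (Int.fract_lt_one t)]
  exact S4_four_translates_sum_eq_one a2 a3 (Int.fract_nonneg t)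
    (Int.fract_lt_one t).le
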